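/- For smooth functions h on phase space, Π L_ham² Π h = (1/m) L_ovd Π h, where L_ovd = −∇U·∇_q + (1/β)Δ_q is the overdamped Langevin generator on L²(ν). -/

import Mathlib

open MeasureTheory ProbabilityTheory

/-- `i`-th standard basis vector of `EuclideanSpace ℝ (Fin d)`. -/
noncomputable def eV (d : ℕ) (i : Fin d) : EuclideanSpace ℝ (Fin d) :=
  EuclideanSpace.single i 1

/-- Partial derivative in the position variable `q_i`. -/
noncomputable def Dq (d : ℕ)
    (f : EuclideanSpace ℝ (Fin d) × EuclideanSpace ℝ (Fin d) → ℝ) (i : Fin d)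
    (x : EuclideanSpace ℝ (Fin d) × EuclideanSpace ℝ (Fin d)) : ℝ :=
  fderiv ℝ f x (eV d i, 0)

/-- Partial derivative in the momentum variable `p_i`. -/
noncomputable def Dp (d : ℕ)
    (f : EuclideanSpace ℝ (Fin d) × EuclideanSpace ℝ (Fin d) → ℝ) (i : Fin d)
    (x : EuclideanSpace ℝ (Fin d) × EuclideanSpace ℝ (Fin d)) : ℝ :=
  fderiv ℝ f x (0, eV d i)

/-- Hamiltonian generator `L_ham = (p/m)·∇_q − ∇U·∇_p`. -/
noncomputable def Lham (d : ℕ) (m : ℝ) (U : EuclideanSpace ℝ (Fin d) → ℝ)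
    (f : EuclideanSpace ℝ (Fin d) × EuclideanSpace ℝ (Fin d) → ℝ)
    (x : EuclideanSpace ℝ (Fin d) × EuclideanSpace ℝ (Fin d)) : ℝ :=
  ∑ i, x.2 i / m * Dq d f i x - ∑ i, fderiv ℝ U x.1 (eV d i) * Dp d f i x

/-- The centered Gaussian measure with variance `m/β` on `EuclideanSpace ℝ (Fin d)`. -/
noncomputable def gaussE (d : ℕ) (m β : ℝ) : Measure (EuclideanSpace ℝ (Fin d)) :=
  (Measure.pi fun _ : Fin d => gaussianReal 0 (Real.toNNReal (m / β))).map
    (MeasurableEquiv.toLp 2 (Fin d → ℝ))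

set_option maxHeartbeats 1000000

section aux
open Real Set NNReal ENNReal Filter

lemma int_gauss1d (v : ℝ≥0) (f : ℝ → ℝ) (hf : v ≠ 0) :
    ∫ x, f x ∂(gaussianReal 0 v) = ∫ x, f x * gaussianPDFReal 0 v x := by
  rw [gaussianReal_of_var_ne_zero 0 hf, gaussianPDF_def]
  have : (fun x => ENNReal.ofReal (gaussianPDFReal 0 v x))
      = fun x => ((Real.toNNReal (gaussianPDFReal 0 v x) : ℝ≥0) : ℝ≥0∞) := by
    ext x; rfl
  rw [this, integral_withDensity_eq_integral_smul
      (by exact (measurable_gaussianPDFReal 0 v).real_toNNReal)]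
  congr 1; ext x
  simp [NNReal.smul_def, Real.coe_toNNReal _ (gaussianPDFReal_nonneg 0 v x), mul_comm]

lemma intble_gauss1d (v : ℝ≥0) {f : ℝ → ℝ} (hmeas : Measurable f)
    (hint : Integrable (fun x => f x * gaussianPDFReal 0 v x)) :
    Integrable f (gaussianReal 0 v) := by
  rcases eq_or_ne v 0 with rfl | hv
  · rw [gaussianReal_zero_var]
    exact (integrable_const (f 0)).congr (ae_eq_dirac f).symm
  · rw [gaussianReal_of_var_ne_zero 0 hv, gaussianPDF_def]
    rw [integrable_withDensity_iff (by exact (measurable_gaussianPDFReal 0 v).ennreal_ofReal)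
      (Filter.Eventually.of_forall fun x => ENNReal.ofReal_lt_top)]
    refine hint.congr (Filter.Eventually.of_forall fun x => ?_)
    simp [ENNReal.toReal_ofReal (gaussianPDFReal_nonneg 0 v x)]

lemma integral_id_gauss (v : ℝ≥0) : ∫ x, x ∂(gaussianReal 0 v) = 0 := by
  have hmap : (gaussianReal 0 v).map (fun x => (-1:ℝ) * x) = gaussianReal 0 v := by
    have h := gaussianReal_map_const_mul (μ := 0) (v := v) (-1)
    simpa using h.trans (by norm_num)
  have h2 : ∫ x, x ∂(gaussianReal 0 v) = ∫ x, (-1:ℝ) * x ∂(gaussianReal 0 v) := by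
    have h3 := integral_map (μ := gaussianReal 0 v) (φ := fun x => (-1:ℝ) * x)
      (f := fun x : ℝ => x) (by fun_prop) (by rw [hmap]; exact aestronglyMeasurable_id)
    rw [hmap] at h3
    exact h3
  have := h2
  rw [integral_const_mul] at this
  linarith

lemma integral_sq_exp (b : ℝ) (hb : 0 < b) :
    ∫ x : ℝ, x ^ 2 * Real.exp (-b * x ^ 2) = b ^ (-(3:ℝ)/2) * Real.Gamma (3/2) := by
  have heven : ∀ x : ℝ, x ^ 2 * Real.exp (-b * x ^ 2)
      = (fun t => t ^ 2 * Real.exp (-b * t ^ 2)) |x| := by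
    intro x; simp [sq_abs]
  calc ∫ x : ℝ, x ^ 2 * Real.exp (-b * x ^ 2)
      = ∫ x : ℝ, (fun t => t ^ 2 * Real.exp (-b * t ^ 2)) |x| := by
        congr 1; ext x; exact heven x
    _ = 2 * ∫ x in Ioi (0:ℝ), x ^ 2 * Real.exp (-b * x ^ 2) := integral_comp_abs (f := fun t => t ^ 2 * Real.exp (-b * t ^ 2))
    _ = 2 * ∫ x in Ioi (0:ℝ), x ^ (2:ℝ) * Real.exp (-b * x ^ (2:ℝ)) := by
        congr 1
        refine setIntegral_congr_fun measurableSet_Ioi (fun x hx => ?_)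
        rw [show (2:ℝ) = ((2:ℕ):ℝ) by norm_num, Real.rpow_natCast]
    _ = 2 * (b ^ (-((2:ℝ) + 1) / 2) * (1 / 2) * Real.Gamma (((2:ℝ) + 1) / 2)) := by
        rw [integral_rpow_mul_exp_neg_mul_rpow (by norm_num) (by norm_num) hb]
    _ = b ^ (-(3:ℝ)/2) * Real.Gamma (3/2) := by norm_num; ring

lemma gamma_3half : Real.Gamma (3/2) = Real.sqrt π / 2 := by
  have h : (3:ℝ)/2 = 1/2 + 1 := by norm_num
  rw [h, Real.Gamma_add_one (by norm_num), Real.Gamma_one_half_eq]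
  ring

lemma integral_sq_gauss (v : ℝ≥0) : ∫ x, x * x ∂(gaussianReal 0 v) = v := by
  rcases eq_or_ne v 0 with rfl | hv
  · rw [gaussianReal_zero_var, integral_dirac]; simp
  · have hvpos : (0:ℝ) < v := lt_of_le_of_ne (v.coe_nonneg) (by exact_mod_cast hv.symm)
    have h2v : (0:ℝ) < 2 * v := by linarith
    set b : ℝ := (2 * (v:ℝ))⁻¹ with hbdef
    have hb : 0 < b := inv_pos.mpr h2v
    rw [int_gauss1d v _ hv]
    have hpdf : ∀ x : ℝ, x * x * gaussianPDFReal 0 v x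
        = (Real.sqrt (2 * π * v))⁻¹ * (x ^ 2 * Real.exp (-b * x ^ 2)) := by
      intro x
      rw [gaussianPDFReal]
      have : -(x - 0) ^ 2 / (2 * v) = -b * x ^ 2 := by
        rw [hbdef]; field_simp; ring
      rw [this]; ring
    simp_rw [hpdf]
    rw [integral_const_mul, integral_sq_exp b hb, gamma_3half]
    have hbval : b ^ (-(3:ℝ)/2) = (2*(v:ℝ)) * Real.sqrt (2*v) := by
      rw [hbdef, Real.inv_rpow h2v.le, neg_div, Real.rpow_neg h2v.le, inv_inv,
        show (3:ℝ)/2 = 1 + 1/2 by norm_num, Real.rpow_add h2v, Real.rpow_one,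
        ← Real.sqrt_eq_rpow]
    rw [hbval]
    have hsqrt : Real.sqrt (2 * π * v) = Real.sqrt π * Real.sqrt (2 * v) := by
      rw [← Real.sqrt_mul Real.pi_pos.le]
      ring_nf
    rw [hsqrt]
    have hπ : (0:ℝ) < Real.sqrt π := Real.sqrt_pos.mpr Real.pi_pos
    have hs2v : (0:ℝ) < Real.sqrt (2 * v) := Real.sqrt_pos.mpr h2v
    field_simp

lemma intble_pow_gauss (v : ℝ≥0) (n : ℕ) :
    Integrable (fun x : ℝ => x ^ n) (gaussianReal 0 v) := by
  apply intble_gauss1d v (measurable_id.pow_const n)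
  rcases eq_or_ne v 0 with rfl | hv
  · simp [gaussianPDFReal_zero_var]
  · have hvpos : (0:ℝ) < v := lt_of_le_of_ne (v.coe_nonneg) (by exact_mod_cast hv.symm)
    have h2v : (0:ℝ) < 2 * v := by linarith
    have hb : (0:ℝ) < (2 * (v:ℝ))⁻¹ := inv_pos.mpr h2v
    have key := (integrable_rpow_mul_exp_neg_mul_sq hb
      (show (-1:ℝ) < (n:ℝ) by exact lt_of_lt_of_le (by norm_num) (Nat.cast_nonneg n))).const_mul ((Real.sqrt (2 * π * v))⁻¹)
    refine key.congr (Filter.Eventually.of_forall fun x => ?_)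
    have hexp : -(x - 0) ^ 2 / (2 * v) = -(2 * (v:ℝ))⁻¹ * x ^ 2 := by field_simp; ring
    simp only [gaussianPDFReal_def, hexp, Real.rpow_natCast, id]
    ring

lemma intble_id_gauss (v : ℝ≥0) : Integrable (fun x : ℝ => x) (gaussianReal 0 v) := by
  simpa using intble_pow_gauss v 1

lemma intble_sq_gauss (v : ℝ≥0) : Integrable (fun x : ℝ => x * x) (gaussianReal 0 v) := by
  simpa [pow_two] using intble_pow_gauss v 2

instance gaussE_prob (d : ℕ) (m β : ℝ) : IsProbabilityMeasure (gaussE d m β) := by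
  rw [gaussE]
  exact Measure.isProbabilityMeasure_map
    (MeasurableEquiv.toLp 2 (Fin d → ℝ)).measurable.aemeasurable

lemma prod_form (d : ℕ) (i j : Fin d) (x : Fin d → ℝ) :
    x i * x j = ∏ k, ((if k = i then x k else 1) * (if k = j then x k else 1)) := by
  rw [Finset.prod_mul_distrib, Finset.prod_ite_eq' Finset.univ i (fun k => x k),
    Finset.prod_ite_eq' Finset.univ j (fun k => x k)]
  simp

lemma gaussE_intble_mul (d : ℕ) (m β : ℝ) (i j : Fin d) :
    Integrable (fun p => p i * p j) (gaussE d m β) := by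
  set v := Real.toNNReal (m / β) with hv
  rw [gaussE,
    (MeasurableEquiv.measurableEmbedding
      (MeasurableEquiv.toLp 2 (Fin d → ℝ))).integrable_map_iff]
  letI : MeasureSpace ℝ := ⟨gaussianReal 0 v⟩
  haveI : SigmaFinite (volume : Measure ℝ) := by
    change SigmaFinite (gaussianReal 0 v); infer_instance
  have : ((fun p : EuclideanSpace ℝ (Fin d) => p i * p j) ∘
      (MeasurableEquiv.toLp 2 (Fin d → ℝ)))
      = fun x : Fin d → ℝ => ∏ k, ((if k = i then x k else 1) * (if k = j then x k else 1)) := by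
    funext x
    exact prod_form d i j x
  rw [show Measure.pi (fun _ : Fin d => gaussianReal 0 v) = (volume : Measure (Fin d → ℝ)) from
    rfl, this]
  apply Integrable.fintype_prod (f := fun k t =>
    (if k = i then t else 1) * (if k = j then t else 1))
  haveI : IsProbabilityMeasure (volume : Measure ℝ) := by
    change IsProbabilityMeasure (gaussianReal 0 v); infer_instance
  intro k
  by_cases hki : k = i
  · subst hki
    by_cases hkj : k = j
    · subst hkj
      simp only [if_pos rfl]
      exact intble_sq_gauss v
    · simp only [if_pos rfl, if_neg hkj, mul_one]
      exact intble_id_gauss v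
  · by_cases hkj : k = j
    · subst hkj
      simp only [if_neg hki, if_pos rfl, one_mul]
      exact intble_id_gauss v
    · simp only [if_neg hki, if_neg hkj, mul_one]
      exact integrable_const (1:ℝ)

lemma gaussE_moment (d : ℕ) (m β : ℝ) (i j : Fin d) :
    ∫ p, p i * p j ∂(gaussE d m β)
      = if i = j then ((Real.toNNReal (m / β) : ℝ≥0) : ℝ) else 0 := by
  set v := Real.toNNReal (m / β) with hv
  rw [gaussE, integral_map_equiv]
  letI : MeasureSpace ℝ := ⟨gaussianReal 0 v⟩
  haveI : SigmaFinite (volume : Measure ℝ) := by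
    change SigmaFinite (gaussianReal 0 v); infer_instance
  have : (fun x : Fin d → ℝ =>
        ((MeasurableEquiv.toLp 2 (Fin d → ℝ)) x) i *
        ((MeasurableEquiv.toLp 2 (Fin d → ℝ)) x) j)
      = fun x : Fin d → ℝ => ∏ k, ((if k = i then x k else 1) * (if k = j then x k else 1)) := by
    funext x
    exact prod_form d i j x
  rw [show Measure.pi (fun _ : Fin d => gaussianReal 0 v) = (volume : Measure (Fin d → ℝ)) from
    rfl]
  rw [show (∫ x : Fin d → ℝ,
      ((MeasurableEquiv.toLp 2 (Fin d → ℝ)) x) i *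
      ((MeasurableEquiv.toLp 2 (Fin d → ℝ)) x) j)
      = ∫ x : Fin d → ℝ, ∏ k, ((if k = i then x k else 1) * (if k = j then x k else 1)) from by
    rw [this]]
  rw [show (volume : Measure (Fin d → ℝ)) = Measure.pi (fun _ => gaussianReal 0 v) from rfl]
  rw [integral_fintype_prod_eq_prod
    (f := fun k t => (if k = i then t else 1) * (if k = j then t else 1))]
  by_cases hij : i = j
  · subst hij
    rw [if_pos rfl]
    rw [Finset.prod_eq_single_of_mem i (Finset.mem_univ i)]
    · simpa using integral_sq_gauss v
    · intro k _ hk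
      haveI : IsProbabilityMeasure (volume : Measure ℝ) := by
        change IsProbabilityMeasure (gaussianReal 0 v); infer_instance
      simp [if_neg hk]
  · rw [if_neg hij]
    apply Finset.prod_eq_zero (Finset.mem_univ j)
    simp only [if_pos rfl, if_neg (Ne.symm hij), one_mul]
    exact integral_id_gauss v

section calc1
variable {d : ℕ} {m : ℝ}

lemma step1 (d : ℕ) (m : ℝ) (U : EuclideanSpace ℝ (Fin d) → ℝ)
    (g : EuclideanSpace ℝ (Fin d) → ℝ) (hg : ContDiff ℝ (⊤ : ℕ∞) g)
    (x : EuclideanSpace ℝ (Fin d) × EuclideanSpace ℝ (Fin d)) :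
    Lham d m U (fun y => g y.1) x = ∑ i, x.2 i / m * fderiv ℝ g x.1 (eV d i) := by
  have hdf : HasFDerivAt (fun y : EuclideanSpace ℝ (Fin d) × EuclideanSpace ℝ (Fin d) => g y.1)
      ((fderiv ℝ g x.1).comp (ContinuousLinearMap.fst ℝ _ _)) x :=
    ((hg.differentiable (by simp) x.1).hasFDerivAt).comp x hasFDerivAt_fst
  have hD := hdf.fderiv
  unfold Lham Dq Dp
  rw [hD]
  simp only [ContinuousLinearMap.comp_apply, ContinuousLinearMap.coe_fst', map_zero, mul_zero,
    Finset.sum_const_zero, sub_zero]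

lemma step2 (d : ℕ) (m : ℝ) (U : EuclideanSpace ℝ (Fin d) → ℝ)
    (g : EuclideanSpace ℝ (Fin d) → ℝ) (hg : ContDiff ℝ (⊤ : ℕ∞) g)
    (x : EuclideanSpace ℝ (Fin d) × EuclideanSpace ℝ (Fin d)) :
    Lham d m U (fun y => ∑ i, y.2 i / m * fderiv ℝ g y.1 (eV d i)) x
      = ∑ j, x.2 j / m * ∑ i, x.2 i / m *
          fderiv ℝ (fun a => fderiv ℝ g a (eV d i)) x.1 (eV d j)
        - ∑ j, fderiv ℝ U x.1 (eV d j) * (fderiv ℝ g x.1 (eV d j) / m) := by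
  have hG : ∀ i : Fin d, ContDiff ℝ (⊤ : ℕ∞) (fun a => fderiv ℝ g a (eV d i)) :=
    fun i => (hg.fderiv_right (by simp)).clm_apply contDiff_const
  set L : Fin d → (EuclideanSpace ℝ (Fin d) × EuclideanSpace ℝ (Fin d)) →L[ℝ] ℝ :=
    fun i => (EuclideanSpace.proj i).comp (ContinuousLinearMap.snd ℝ _ _) with hL
  set D : Fin d → (EuclideanSpace ℝ (Fin d) × EuclideanSpace ℝ (Fin d)) →L[ℝ] ℝ :=
    fun i => (x.2 i / m) • ((fderiv ℝ (fun a => fderiv ℝ g a (eV d i)) x.1).comp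
            (ContinuousLinearMap.fst ℝ _ _))
          + (fderiv ℝ g x.1 (eV d i)) • (m⁻¹ • L i) with hD
  have hFi : ∀ i : Fin d,
      HasFDerivAt (fun y : EuclideanSpace ℝ (Fin d) × EuclideanSpace ℝ (Fin d) =>
          y.2 i / m * fderiv ℝ g y.1 (eV d i)) (D i) x := by
    intro i
    have h1 : HasFDerivAt (fun y : EuclideanSpace ℝ (Fin d) × EuclideanSpace ℝ (Fin d) =>
        y.2 i / m) (m⁻¹ • L i) x := by
      have hbase : HasFDerivAt (fun y : EuclideanSpace ℝ (Fin d) × EuclideanSpace ℝ (Fin d) =>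
          (L i) y) (L i) x := (L i).hasFDerivAt
      have h2 := hbase.const_mul m⁻¹
      refine h2.congr_of_eventuallyEq ?_
      filter_upwards with y
      simp [hL, div_eq_inv_mul]
    have h2 : HasFDerivAt (fun y : EuclideanSpace ℝ (Fin d) × EuclideanSpace ℝ (Fin d) =>
        fderiv ℝ g y.1 (eV d i))
        ((fderiv ℝ (fun a => fderiv ℝ g a (eV d i)) x.1).comp (ContinuousLinearMap.fst ℝ _ _)) x :=
      (((hG i).differentiable (by simp) x.1).hasFDerivAt).comp x hasFDerivAt_fst
    exact h1.mul h2
  have hF : HasFDerivAt (fun y : EuclideanSpace ℝ (Fin d) × EuclideanSpace ℝ (Fin d) =>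
      ∑ i, y.2 i / m * fderiv ℝ g y.1 (eV d i)) (∑ i, D i) x :=
    HasFDerivAt.fun_sum (fun i _ => hFi i)
  have hDeq := hF.fderiv
  unfold Lham Dq Dp
  rw [hDeq]
  have heval1 : ∀ j : Fin d, (∑ i, D i) (eV d j, 0)
      = ∑ i, x.2 i / m * fderiv ℝ (fun a => fderiv ℝ g a (eV d i)) x.1 (eV d j) := by
    intro j
    rw [ContinuousLinearMap.sum_apply]
    refine Finset.sum_congr rfl fun i _ => ?_
    rw [hD]
    simp only [ContinuousLinearMap.add_apply, ContinuousLinearMap.smul_apply,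
      ContinuousLinearMap.comp_apply, ContinuousLinearMap.coe_fst', smul_eq_mul, hL,
      ContinuousLinearMap.coe_snd']
    have hz : (EuclideanSpace.proj i) ((eV d j, (0 : EuclideanSpace ℝ (Fin d))).2) = 0 := by
      simp
    rw [hz]
    ring
  have heval2 : ∀ j : Fin d, (∑ i, D i) (0, eV d j)
      = fderiv ℝ g x.1 (eV d j) / m := by
    intro j
    rw [ContinuousLinearMap.sum_apply]
    have hterm : ∀ i : Fin d,
        (D i) ((0 : EuclideanSpace ℝ (Fin d)), eV d j)
        = if i = j then fderiv ℝ g x.1 (eV d i) / m else 0 := by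
      intro i
      rw [hD]
      simp only [ContinuousLinearMap.add_apply, ContinuousLinearMap.smul_apply,
        ContinuousLinearMap.comp_apply, ContinuousLinearMap.coe_fst', map_zero, smul_eq_mul,
        mul_zero, zero_add, hL, ContinuousLinearMap.coe_snd']
      have hz : (EuclideanSpace.proj i)
          (((0 : EuclideanSpace ℝ (Fin d)), eV d j).2) = eV d j i := rfl
      rw [hz]
      unfold eV
      rw [EuclideanSpace.single_apply]
      by_cases hij : i = j
      · rw [if_pos hij, if_pos hij]
        ring
      · rw [if_neg hij, if_neg hij]
        ring
    rw [Finset.sum_congr rfl fun i _ => hterm i, Finset.sum_ite_eq' Finset.univ j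
      (fun i => fderiv ℝ g x.1 (eV d i) / m), if_pos (Finset.mem_univ j)]
  simp only [heval1, heval2]
end calc1

lemma keyLham (d : ℕ) (m : ℝ) (U : EuclideanSpace ℝ (Fin d) → ℝ)
    (g : EuclideanSpace ℝ (Fin d) → ℝ) (hg : ContDiff ℝ (⊤ : ℕ∞) g)
    (x : EuclideanSpace ℝ (Fin d) × EuclideanSpace ℝ (Fin d)) :
    Lham d m U (fun x' => Lham d m U (fun y => g y.1) x') x
      = ∑ j, ∑ i, fderiv ℝ (fun a => fderiv ℝ g a (eV d i)) x.1 (eV d j) / (m*m)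
          * (x.2 i * x.2 j)
        - ∑ j, fderiv ℝ U x.1 (eV d j) * (fderiv ℝ g x.1 (eV d j) / m) := by
  have hfun : (fun x' => Lham d m U (fun y => g y.1) x')
      = fun y => ∑ i, y.2 i / m * fderiv ℝ g y.1 (eV d i) := funext (step1 d m U g hg)
  rw [hfun, step2 d m U g hg x]
  congr 1
  refine Finset.sum_congr rfl fun j _ => ?_
  rw [Finset.mul_sum]
  refine Finset.sum_congr rfl fun i _ => ?_
  ring

end aux

/-- For smooth functions `h` on phase space, `Π L_ham² Π h = (1/m) L_ovd Π h`, where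
`L_ovd = −∇U·∇_q + (1/β)Δ_q` is the overdamped Langevin generator. -/
theorem pi_Lham_sq_pi (d : ℕ) (m β : ℝ) (hm : 0 < m) (hβ : 0 < β)
    (U : EuclideanSpace ℝ (Fin d) → ℝ) (hU : ContDiff ℝ (⊤ : ℕ∞) U)
    (h : EuclideanSpace ℝ (Fin d) × EuclideanSpace ℝ (Fin d) → ℝ)
    (hh : ContDiff ℝ (⊤ : ℕ∞) h)
    (hPh : ContDiff ℝ (⊤ : ℕ∞) (fun q => ∫ p, h (q, p) ∂(gaussE d m β))) :
    ∀ q : EuclideanSpace ℝ (Fin d),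
      ∫ p, Lham d m U
          (fun x => Lham d m U (fun y => ∫ p', h (y.1, p') ∂(gaussE d m β)) x)
          (q, p) ∂(gaussE d m β)
        = (1 / m) *
          (-∑ i, fderiv ℝ U q (eV d i) *
              fderiv ℝ (fun q' => ∫ p', h (q', p') ∂(gaussE d m β)) q (eV d i)
            + (1 / β) * ∑ i,
              fderiv ℝ
                (fun q' => fderiv ℝ (fun q'' => ∫ p', h (q'', p') ∂(gaussE d m β)) q' (eV d i))
                q (eV d i)) := by
  intro q
  have hmain : ∀ p : EuclideanSpace ℝ (Fin d),
      Lham d m U (fun x => Lham d m U (fun y => ∫ p', h (y.1, p') ∂(gaussE d m β)) x) (q, p)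
      = ∑ j, ∑ i, fderiv ℝ
            (fun a => fderiv ℝ (fun q'' => ∫ p', h (q'', p') ∂(gaussE d m β)) a (eV d i))
            q (eV d j) / (m*m) * (p i * p j)
        - ∑ j, fderiv ℝ U q (eV d j) *
            (fderiv ℝ (fun q' => ∫ p', h (q', p') ∂(gaussE d m β)) q (eV d j) / m) := by
    intro p
    simpa using keyLham d m U (fun a => ∫ p', h (a, p') ∂(gaussE d m β)) hPh (q, p)
  simp only [hmain]
  haveI : IsProbabilityMeasure (gaussE d m β) := gaussE_prob d m β
  have hintc : ∀ i j : Fin d, Integrable (fun p : EuclideanSpace ℝ (Fin d) =>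
      fderiv ℝ (fun a => fderiv ℝ (fun q'' => ∫ p', h (q'', p') ∂(gaussE d m β)) a (eV d i))
        q (eV d j) / (m*m) * (p i * p j)) (gaussE d m β) :=
    fun i j => (gaussE_intble_mul d m β i j).const_mul _
  have hS : Integrable (fun p : EuclideanSpace ℝ (Fin d) => ∑ j, ∑ i, fderiv ℝ
        (fun a => fderiv ℝ (fun q'' => ∫ p', h (q'', p') ∂(gaussE d m β)) a (eV d i))
        q (eV d j) / (m*m) * (p i * p j)) (gaussE d m β) :=
    integrable_finset_sum _ (fun j _ => integrable_finset_sum _ (fun i _ => hintc i j))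
  rw [integral_sub hS (integrable_const _), integral_const, probReal_univ,
    one_smul]
  rw [integral_finset_sum _ (fun j _ => integrable_finset_sum _ (fun i _ => hintc i j))]
  have h1 : ∀ j : Fin d, (∫ p, ∑ i, fderiv ℝ
        (fun a => fderiv ℝ (fun q'' => ∫ p', h (q'', p') ∂(gaussE d m β)) a (eV d i))
        q (eV d j) / (m*m) * (p i * p j) ∂(gaussE d m β))
      = fderiv ℝ (fun a => fderiv ℝ (fun q'' => ∫ p', h (q'', p') ∂(gaussE d m β)) a (eV d j))
        q (eV d j) / (m*m) * (m/β) := by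
    intro j
    rw [integral_finset_sum _ (fun i _ => hintc i j)]
    have h2 : ∀ i : Fin d, (∫ p, fderiv ℝ
          (fun a => fderiv ℝ (fun q'' => ∫ p', h (q'', p') ∂(gaussE d m β)) a (eV d i))
          q (eV d j) / (m*m) * (p i * p j) ∂(gaussE d m β))
        = if i = j then fderiv ℝ
            (fun a => fderiv ℝ (fun q'' => ∫ p', h (q'', p') ∂(gaussE d m β)) a (eV d i))
            q (eV d j) / (m*m) * (m/β) else 0 := by
      intro i
      rw [integral_const_mul, gaussE_moment d m β i j,
        Real.coe_toNNReal _ (div_nonneg hm.le hβ.le)]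
      by_cases hij : i = j
      · rw [if_pos hij, if_pos hij]
      · rw [if_neg hij, if_neg hij, mul_zero]
    rw [Finset.sum_congr rfl fun i _ => h2 i]
    rw [Finset.sum_ite_eq' Finset.univ j, if_pos (Finset.mem_univ j)]
  rw [Finset.sum_congr rfl fun j _ => h1 j]
  have l1 : ∑ j : Fin d, fderiv ℝ
        (fun a => fderiv ℝ (fun q'' => ∫ p', h (q'', p') ∂(gaussE d m β)) a (eV d j))
        q (eV d j) / (m*m) * (m/β)
      = 1/m * ((1/β) * ∑ j : Fin d, fderiv ℝ
        (fun a => fderiv ℝ (fun q'' => ∫ p', h (q'', p') ∂(gaussE d m β)) a (eV d j))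
        q (eV d j)) := by
    rw [Finset.mul_sum, Finset.mul_sum]
    refine Finset.sum_congr rfl fun j _ => ?_
    field_simp
  have l2 : ∑ j : Fin d, fderiv ℝ U q (eV d j) *
        (fderiv ℝ (fun q' => ∫ p', h (q', p') ∂(gaussE d m β)) q (eV d j) / m)
      = 1/m * ∑ j : Fin d, fderiv ℝ U q (eV d j) *
        fderiv ℝ (fun q' => ∫ p', h (q', p') ∂(gaussE d m β)) q (eV d j) := by
    rw [Finset.mul_sum]
    refine Finset.sum_congr rfl fun j _ => ?_
    ring
  rw [l1, l2, mul_add, mul_neg]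
  ring
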